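/- Let w ∈ αΣ* ∩ Σ*‾α be non-α-crossing, and suppose u ∈ P_α(w), ‾v ∈ S_‾α(w) satisfy v ∈ (P_α(uα))* and u ∈ (‾(S_‾α(‾α‾v)))*. Then (P_α(uα))* · w · (‾(P_α(uα)))* ⊆ H*_α(w). -/

import Mathlib

open List

namespace Hairpin

variable {S : Type} [DecidableEq S]

/-- Antimorphic extension of an involution to words. -/
def comp (bar : S → S) (w : List S) : List S := (w.map bar).reverse

/-- Right hairpin completion w.r.t. primer `a`. -/
def RH (bar : S → S) (a w z : List S) : Prop :=
  ∃ γ β : List S, w = γ ++ a ++ β ++ comp bar a ∧ z = w ++ comp bar γ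

/-- Left hairpin completion w.r.t. primer `a`. -/
def LH (bar : S → S) (a w z : List S) : Prop :=
  ∃ γ β : List S, w = a ++ β ++ comp bar a ++ comp bar γ ∧ z = γ ++ w

/-- One hairpin completion step. -/
def HC (bar : S → S) (a w z : List S) : Prop := RH bar a w z ∨ LH bar a w z

/-- Iterated hairpin completion `H*_α(w)`. -/
def HCstar (bar : S → S) (a w : List S) : Set (List S) :=
  { z | Relation.ReflTransGen (HC bar a) w z }

/-- `w` is non-`a`-crossing: every occurrence of `a` starts no later than
every occurrence of `comp bar a`. -/
def NonCrossing (bar : S → S) (a w : List S) : Prop :=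
  ∀ i j : ℕ, a <+: w.drop i → comp bar a <+: w.drop j → i ≤ j

/-- The set of `a`-prefixes of `w`. -/
def Pa (a w : List S) : Set (List S) := { u | u ++ a <+: w }

/-- The set of `‾a`-suffixes of `w` (the elements are the words `‾v`). -/
def Sa (bar : S → S) (a w : List S) : Set (List S) :=
  { x | comp bar a ++ x <:+ w }

/-- The set of complements of `‾a`-suffixes of `w`, i.e. `‾(S_‾α(w))`. -/
def barSa (bar : S → S) (a w : List S) : Set (List S) :=
  { v | comp bar a ++ comp bar v <:+ w }

/-- Kleene star of a set of words: all finite concatenations. -/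
def star (X : Set (List S)) : Set (List S) :=
  { x | ∃ l : List (List S), (∀ y ∈ l, y ∈ X) ∧ x = l.flatten }

/-- `ind_α(x)`: the number of occurrences of `a` in `x ++ a` other than the
suffix occurrence, i.e. the number of positions `i < |x|` where `a` occurs. -/
def inda (a x : List S) : ℕ :=
  ((Finset.range x.length).filter (fun i => a <+: (x ++ a).drop i)).card

/-!
Call `g` a piece if `gα` is a prefix of both `w` and `‾w`. A left completion prepends a piece `g`
to a word that starts with `α` and ends with `‾α‾g`, provided `α` and `‾α‾g` do not overlap, and
a right completion appends `‾g` symmetrically; non-crossing gives `|g| + 2|α| ≤ |w|`, so there is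
always room. Prepending `g` to `x' w ‾y'` needs `gα` to be a prefix of `y' ‾w`, which holds when
`g` is no longer than the piece attached last on the right.

The hypotheses on `u` and `v` make every element of `P_α(uα)` a product of common `α`-prefixes
of `uα` and `vα`; these are pieces, as `uα` is a prefix of `w` and `vα` one of `‾w`. So `x` and
`‾y` are products of pieces, which can be attached to `w` in a suitable order.
-/

section

omit [DecidableEq S]

section Complement

variable {bar : S → S}

@[simp] lemma comp_nil : comp bar ([] : List S) = [] := rfl

@[simp] lemma comp_append (s t : List S) : comp bar (s ++ t) = comp bar t ++ comp bar s := by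
  simp [comp]

@[simp] lemma length_comp (s : List S) : (comp bar s).length = s.length := by
  simp [comp]

lemma comp_comp (hbar : Function.Involutive bar) (s : List S) : comp bar (comp bar s) = s := by
  simp [comp, List.map_reverse, hbar.comp_self]

lemma getElem?_comp (s : List S) {i : ℕ} (hi : i < s.length) :
    (comp bar s)[i]? = s[s.length - 1 - i]?.map bar := by
  rw [comp, List.getElem?_reverse (by simpa using hi), List.length_map, List.getElem?_map]

lemma comp_suffix_iff (hbar : Function.Involutive bar) {s t : List S} :
    comp bar s <:+ t ↔ s <+: comp bar t := by
  constructor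
  · rintro ⟨r, rfl⟩
    exact ⟨comp bar r, by simp [comp_comp hbar]⟩
  · rintro ⟨r, hr⟩
    exact ⟨comp bar r, by rw [← comp_append, hr, comp_comp hbar]⟩

end Complement

section Star

variable {X Y : Set (List S)}

lemma nil_mem_star (X : Set (List S)) : [] ∈ star X :=
  ⟨[], by simp, rfl⟩

lemma mem_star_of_mem {g : List S} (h : g ∈ X) : g ∈ star X :=
  ⟨[g], by simpa using h, by simp⟩

lemma append_mem_star {x y : List S} (hx : x ∈ star X) (hy : y ∈ star X) :
    x ++ y ∈ star X := by
  obtain ⟨lx, hlx, rfl⟩ := hx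
  obtain ⟨ly, hly, rfl⟩ := hy
  refine ⟨lx ++ ly, fun g hg => ?_, by simp⟩
  rcases List.mem_append.mp hg with h | h
  exacts [hlx g h, hly g h]

lemma star_subset_star (h : X ⊆ star Y) : star X ⊆ star Y := by
  rintro _ ⟨l, hl, rfl⟩
  induction l with
  | nil => exact nil_mem_star Y
  | cons g l ih =>
    simpa using append_mem_star (h (hl g (by simp))) (ih fun g hg => hl g (by simp [hg]))

lemma star_mono (h : X ⊆ Y) : star X ⊆ star Y :=
  star_subset_star fun _ hg => mem_star_of_mem (h hg)

lemma exists_flatten_of_mem_star {x : List S} (hx : x ∈ star X) :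
    ∃ l : List (List S), (∀ g ∈ l, g ∈ X ∧ g ≠ []) ∧ x = l.flatten := by
  obtain ⟨l, hl, rfl⟩ := hx
  refine ⟨l.filter (· ≠ []), fun g hg => ?_, List.flatten_filter_ne_nil.symm⟩
  rw [List.mem_filter] at hg
  exact ⟨hl g hg.1, by simpa using hg.2⟩

lemma comp_mem_star {bar : S → S} (hbar : Function.Involutive bar) {y : List S}
    (hy : y ∈ star (comp bar '' X)) : comp bar y ∈ star X := by
  obtain ⟨l, hl, rfl⟩ := hy
  refine ⟨(l.map (comp bar)).reverse, fun g hg => ?_, ?_⟩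
  · obtain ⟨e, he, rfl⟩ := List.mem_map.mp (List.mem_reverse.mp hg)
    obtain ⟨q, hq, rfl⟩ := hl e he
    rwa [comp_comp hbar]
  · clear hl
    induction l with
    | nil => rfl
    | cons e l ih => simp [ih]

end Star

section Periodicity

variable {bar : S → S}

lemma hasPeriod_append_of_prefix {g a : List S} (h : a <+: g ++ a) :
    (g ++ a).HasPeriod g.length := by
  simpa [List.HasPeriod] using h

lemma hasPeriod_comp {x : List S} {p : ℕ} (h : x.HasPeriod p) : (comp bar x).HasPeriod p := by
  rw [List.hasPeriod_iff_getElem?] at h ⊢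
  intro i hi
  rw [length_comp] at hi
  rw [getElem?_comp x (by omega), getElem?_comp x (by omega), h (x.length - 1 - (i + p)) (by omega),
    show x.length - 1 - (i + p) + p = x.length - 1 - i by omega]

lemma hasPeriod_of_overlap {x y r s : List S} {p : ℕ} (hx : x.HasPeriod p) (hy : y.HasPeriod p)
    (h : x ++ r = s ++ y) (hlen : s.length + p ≤ x.length) : (x ++ r).HasPeriod p := by
  have hsum := congrArg List.length h
  simp only [List.length_append] at hsum
  rw [List.hasPeriod_iff_getElem?] at hx hy ⊢
  intro i hi
  simp only [List.length_append] at hi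
  by_cases hix : i + p < x.length
  · rw [List.getElem?_append_left (by omega), List.getElem?_append_left hix]
    exact hx i (by omega)
  · rw [h, List.getElem?_append_right (by omega), List.getElem?_append_right (by omega),
      show i + p - s.length = i - s.length + p by omega]
    exact hy _ (by omega)

lemma prefix_drop_mul_of_hasPeriod {w a : List S} {p : ℕ} (hw : w.HasPeriod p) (ha : a <+: w)
    {k : ℕ} (hk : p * k + a.length ≤ w.length) : a <+: w.drop (p * k) := by
  rw [List.prefix_iff_getElem?] at ha ⊢
  intro i hi
  rw [List.getElem?_drop, ← ha i hi, List.hasPeriod_iff_forall_getElem?_mod.mp hw _ (by omega),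
    Nat.mul_add_mod, ← List.hasPeriod_iff_forall_getElem?_mod.mp hw _ (by omega)]

/-- If the bound failed, the prefix `gα` and the suffix `‾(gα)` would overlap in more than `|g|`
letters, making `w` `|g|`-periodic, and the `α` at the last multiple of `|g|` would lie to the
right of the `‾α` starting `‾(gα)`. -/
theorem length_add_two_mul_le_of_nonCrossing {a g w : List S} (hnc : NonCrossing bar a w)
    (hg : g ≠ []) (hga : a <+: g ++ a) (hpre : g ++ a <+: w) (hsuf : comp bar (g ++ a) <:+ w) :
    g.length + 2 * a.length ≤ w.length := by
  by_contra hlt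
  obtain ⟨r, rfl⟩ := hpre
  simp only [List.length_append] at hlt
  obtain ⟨s, hs⟩ := hsuf
  have hlen := congrArg List.length hs
  simp only [List.length_append, length_comp] at hlen
  have hper : (g ++ a ++ r).HasPeriod g.length :=
    hasPeriod_of_overlap (hasPeriod_append_of_prefix hga)
      (hasPeriod_comp (hasPeriod_append_of_prefix hga)) hs.symm (by simp; omega)
  have hpos : 0 < g.length := List.length_pos_iff.mpr hg
  have hdiv := Nat.div_add_mod (s.length + g.length) g.length
  have hmod := Nat.mod_lt (s.length + g.length) hpos
  set k := (s.length + g.length) / g.length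
  have hocc : a <+: (g ++ a ++ r).drop (g.length * k) :=
    prefix_drop_mul_of_hasPeriod hper (hga.trans (List.prefix_append _ r))
      (by simp; omega)
  have hocc' : comp bar a <+: (g ++ a ++ r).drop s.length := by
    rw [← hs, List.drop_left, comp_append]
    exact List.prefix_append _ _
  have := hnc _ _ hocc hocc'
  omega

end Periodicity

section Factorization

variable {a : List S}

@[simp] lemma mem_Pa {u w : List S} : u ∈ Pa a w ↔ u ++ a <+: w := Iff.rfl

lemma eq_nil_of_append_prefix {r : List S} (h : r ++ a <+: a) : r = [] := by
  have := h.length_le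
  simp only [List.length_append] at this
  exact List.length_eq_zero_iff.mp (by omega)

lemma prefix_flatten_append {c t : List S} {l : List (List S)} (hc : a <+: c)
    (hl : ∀ g ∈ l, g ++ a <+: c) (ht : a <+: t) : a <+: l.flatten ++ t := by
  induction l with
  | nil => simpa using ht
  | cons g l ih =>
    have hg : a <+: g ++ a := List.prefix_of_prefix_length_le hc (hl g (by simp)) (by simp)
    have hrest := ih fun g hg => hl g (by simp [hg])
    simpa using hg.trans ((List.prefix_append_right_inj g).mpr hrest)

lemma prefix_append_cases {q r L : List S} (hL : a <+: L) (h : r ++ a <+: q ++ L) :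
    r ++ a <+: q ++ a ∨ ∃ r', r = q ++ r' ∧ q.length < r.length ∧ r' ++ a <+: L := by
  by_cases hlen : r.length ≤ q.length
  · exact Or.inl (List.prefix_of_prefix_length_le h ((List.prefix_append_right_inj q).mpr hL)
      (by simpa using hlen))
  · obtain ⟨r', rfl⟩ : q <+: r := List.prefix_of_prefix_length_le (List.prefix_append q L)
      ((List.prefix_append r a).trans h) (by omega)
    exact Or.inr ⟨r', rfl, by omega, by simpa using h⟩

lemma mem_star_of_prefix_flatten_append {v : List S} {T : Set (List S)} {k : ℕ}
    (hav : a <+: v ++ a) (ih : ∀ r, r.length < k → r ∈ Pa a (v ++ a) → r ∈ star T)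
    {l : List (List S)} (hl : ∀ q ∈ l, q ∈ Pa a (v ++ a)) {r : List S}
    (hr : r ++ a <+: l.flatten ++ a) (hrk : r.length < k) : r ∈ star T := by
  induction l generalizing r with
  | nil => simp [eq_nil_of_append_prefix (by simpa using hr), nil_mem_star]
  | cons q l ihl =>
    have hl' : ∀ g ∈ l, g ∈ Pa a (v ++ a) := fun g hg => hl g (by simp [hg])
    have hq : q ∈ Pa a (v ++ a) := hl q (by simp)
    rcases prefix_append_cases (prefix_flatten_append hav hl' List.prefix_rfl)
      (by simpa using hr) with hrq | ⟨r', rfl, hqr, hr'⟩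
    · exact ih r hrk (hrq.trans hq)
    · exact append_mem_star (ih q (by omega) hq) (ihl hl' hr' (by simp at hrk; omega))

lemma mem_star_inter_of_forall_length_lt {u v p : List S} (hav : a <+: v ++ a)
    (hu : u ∈ star (Pa a (v ++ a)))
    (ih : ∀ r, r.length < p.length → r ∈ Pa a (v ++ a) →
      r ∈ star (Pa a (u ++ a) ∩ Pa a (v ++ a)))
    (hp : p ∈ Pa a (u ++ a)) : p ∈ star (Pa a (u ++ a) ∩ Pa a (v ++ a)) := by
  obtain ⟨l, hl, rfl⟩ := exists_flatten_of_mem_star hu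
  cases l with
  | nil => simp [eq_nil_of_append_prefix (by simpa using hp), nil_mem_star]
  | cons q l =>
    have hl' : ∀ g ∈ l, g ∈ Pa a (v ++ a) := fun g hg => (hl g (by simp [hg])).1
    obtain ⟨hq, hq0⟩ := hl q (by simp)
    rcases prefix_append_cases (prefix_flatten_append hav hl' List.prefix_rfl)
      (by simpa using hp) with hpq | ⟨p', rfl, hqp, hp'⟩
    · exact mem_star_of_mem ⟨hp, hpq.trans hq⟩
    · have hq0 := List.length_pos_iff.mpr hq0
      exact append_mem_star (ih q hqp hq)
        (mem_star_of_prefix_flatten_append hav ih hl' hp' (by simp; omega))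

theorem mem_star_inter_of_mem_union {u v : List S} (hau : a <+: u ++ a) (hav : a <+: v ++ a)
    (hv : v ∈ star (Pa a (u ++ a))) (hu : u ∈ star (Pa a (v ++ a))) {p : List S}
    (hp : p ∈ Pa a (u ++ a) ∪ Pa a (v ++ a)) :
    p ∈ star (Pa a (u ++ a) ∩ Pa a (v ++ a)) := by
  induction hn : p.length using Nat.strong_induction_on generalizing p with
  | _ n ih =>
    subst hn
    rcases hp with hp | hp
    · exact mem_star_inter_of_forall_length_lt hav hu
        (fun r hr hrv => ih _ hr (Or.inr hrv) rfl) hp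
    · rw [Set.inter_comm]
      refine mem_star_inter_of_forall_length_lt hau hv (fun r hr hru => ?_) hp
      rw [Set.inter_comm]
      exact ih _ hr (Or.inl hru) rfl

end Factorization

section Completion

variable {bar : S → S} {a w : List S}

lemma LH_comp_of_RH (hbar : Function.Involutive bar) {W Z : List S} (h : RH bar a W Z) :
    LH bar a (comp bar W) (comp bar Z) := by
  obtain ⟨γ, β, rfl, rfl⟩ := h
  exact ⟨γ, comp bar β, by simp [comp_comp hbar], by simp [comp_comp hbar]⟩

lemma RH_comp_of_LH (hbar : Function.Involutive bar) {W Z : List S} (h : LH bar a W Z) :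
    RH bar a (comp bar W) (comp bar Z) := by
  obtain ⟨γ, β, rfl, rfl⟩ := h
  exact ⟨γ, comp bar β, by simp [comp_comp hbar], by simp [comp_comp hbar]⟩

lemma reflTransGen_HC_comp (hbar : Function.Involutive bar) {W Z : List S}
    (h : Relation.ReflTransGen (HC bar a) W Z) :
    Relation.ReflTransGen (HC bar a) (comp bar W) (comp bar Z) :=
  h.lift _ fun _ _ hWZ =>
    hWZ.elim (fun h => Or.inr (LH_comp_of_RH hbar h)) (fun h => Or.inl (RH_comp_of_LH hbar h))

lemma LH_of_prefix_of_suffix {W γ : List S} (hpre : a <+: W)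
    (hsuf : comp bar a ++ comp bar γ <:+ W) (hlen : γ.length + 2 * a.length ≤ W.length) :
    LH bar a W (γ ++ W) := by
  obtain ⟨s, hs⟩ := hsuf
  have hslen := congrArg List.length hs
  simp only [List.length_append, length_comp] at hslen
  obtain ⟨β, rfl⟩ : a <+: s := List.prefix_of_prefix_length_le hpre ⟨_, hs⟩ (by omega)
  exact ⟨γ, β, by simp [← hs], rfl⟩

def PaBoth (bar : S → S) (a w : List S) : Set (List S) := Pa a w ∩ Pa a (comp bar w)

lemma PaBoth_comp (hbar : Function.Involutive bar) :
    PaBoth bar a (comp bar w) = PaBoth bar a w := by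
  rw [PaBoth, PaBoth, comp_comp hbar, Set.inter_comm]

structure Admissible (bar : S → S) (a w : List S) : Prop where
  prefix_self : a <+: w
  prefix_comp : a <+: comp bar w
  length_le : ∀ g ∈ PaBoth bar a w, g ≠ [] → g.length + 2 * a.length ≤ w.length

lemma admissible_comp (hbar : Function.Involutive bar) (hw : Admissible bar a w) :
    Admissible bar a (comp bar w) where
  prefix_self := hw.prefix_comp
  prefix_comp := by rw [comp_comp hbar]; exact hw.prefix_self
  length_le := by rw [PaBoth_comp hbar, length_comp]; exact hw.length_le

lemma admissible_of_nonCrossing (hbar : Function.Involutive bar) (hp : a <+: w)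
    (hs : comp bar a <:+ w) (hnc : NonCrossing bar a w) : Admissible bar a w where
  prefix_self := hp
  prefix_comp := (comp_suffix_iff hbar).mp hs
  length_le g hg hg0 := length_add_two_mul_le_of_nonCrossing hnc hg0
    (List.prefix_of_prefix_length_le hp hg.1 (by simp)) hg.1 ((comp_suffix_iff hbar).mpr hg.2)

def wrap (bar : S → S) (w : List S) (A B : List (List S)) : List S :=
  A.flatten ++ w ++ comp bar B.flatten

lemma comp_wrap (hbar : Function.Involutive bar) (A B : List (List S)) :
    comp bar (wrap bar w A B) = wrap bar (comp bar w) B A := by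
  simp [wrap, comp_comp hbar]

lemma append_prefix_flatten_append {t δ : List S} {B : List (List S)} (ht : a <+: t)
    (hB : ∀ b ∈ B, b ++ a <+: t) (hδ : δ ++ a <+: t)
    (hδB : ∀ b ∈ B.head?, δ.length ≤ b.length) : δ ++ a <+: B.flatten ++ t := by
  cases B with
  | nil => simpa using hδ
  | cons b B =>
    have hstart : a <+: B.flatten ++ t :=
      prefix_flatten_append ht (fun g hg => hB g (by simp [hg])) ht
    have hδb : δ ++ a <+: b ++ a :=
      List.prefix_of_prefix_length_le hδ (hB b (by simp)) (by simpa using hδB b rfl)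
    simpa using hδb.trans ((List.prefix_append_right_inj b).mpr hstart)

lemma Admissible.HC_wrap_cons (hbar : Function.Involutive bar) (hw : Admissible bar a w)
    {A B : List (List S)} (hA : ∀ g ∈ A, g ∈ PaBoth bar a w)
    (hB : ∀ g ∈ B, g ∈ PaBoth bar a w) {δ : List S} (hδ : δ ∈ PaBoth bar a w)
    (hδ0 : δ ≠ []) (hδB : ∀ b ∈ B.head?, δ.length ≤ b.length) :
    HC bar a (wrap bar w A B) (wrap bar w (δ :: A) B) := by
  have hpre : a <+: wrap bar w A B := by
    have := prefix_flatten_append hw.prefix_self (fun g hg => (hA g hg).1) hw.prefix_self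
    simpa [wrap] using List.prefix_append_of_prefix this
  have hsuf : comp bar a ++ comp bar δ <:+ wrap bar w A B := by
    rw [← comp_append, comp_suffix_iff hbar, comp_wrap hbar]
    have := append_prefix_flatten_append hw.prefix_comp (fun g hg => (hB g hg).2) hδ.2 hδB
    simpa [wrap] using List.prefix_append_of_prefix this
  have hlen : w.length ≤ (wrap bar w A B).length := by simp [wrap]; omega
  have := LH_of_prefix_of_suffix hpre hsuf (by linarith [hw.length_le δ hδ hδ0])
  exact Or.inr (by simpa [wrap] using this)

lemma Admissible.reflTransGen_wrap_append_left (hbar : Function.Involutive bar)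
    (hw : Admissible bar a w) {A B l : List (List S)} (hA : ∀ g ∈ A, g ∈ PaBoth bar a w)
    (hB : ∀ g ∈ B, g ∈ PaBoth bar a w) (hl : ∀ g ∈ l, g ∈ PaBoth bar a w)
    (hlB : ∀ g ∈ l, ∀ b ∈ B.head?, g.length ≤ b.length) :
    Relation.ReflTransGen (HC bar a) (wrap bar w A B) (wrap bar w (l ++ A) B) := by
  induction l with
  | nil => exact .refl
  | cons δ l ih =>
    have hlA : ∀ g ∈ l ++ A, g ∈ PaBoth bar a w := by
      intro g hg
      rcases List.mem_append.mp hg with h | h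
      exacts [hl g (by simp [h]), hA g h]
    have hrest := ih (fun g hg => hl g (by simp [hg])) (fun g hg => hlB g (by simp [hg]))
    rcases eq_or_ne δ [] with rfl | hδ0
    · simpa [wrap] using hrest
    · exact hrest.tail (hw.HC_wrap_cons hbar hlA hB (hl δ (by simp)) hδ0 (hlB δ (by simp)))

lemma Admissible.reflTransGen_wrap_append_right (hbar : Function.Involutive bar)
    (hw : Admissible bar a w) {A B l : List (List S)} (hA : ∀ g ∈ A, g ∈ PaBoth bar a w)
    (hB : ∀ g ∈ B, g ∈ PaBoth bar a w) (hl : ∀ g ∈ l, g ∈ PaBoth bar a w)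
    (hlA : ∀ g ∈ l, ∀ b ∈ A.head?, g.length ≤ b.length) :
    Relation.ReflTransGen (HC bar a) (wrap bar w A B) (wrap bar w A (l ++ B)) := by
  simp only [← PaBoth_comp hbar (w := w)] at hA hB hl
  simpa only [comp_wrap hbar, comp_comp hbar] using reflTransGen_HC_comp hbar
    ((admissible_comp hbar hw).reflTransGen_wrap_append_left hbar hB hA hl hlA)

/-- Attaching the longest remaining piece together with the pieces between it and `w` keeps the
length condition of `Admissible.HC_wrap_cons` true on both sides. -/
theorem Admissible.reflTransGen_wrap (hbar : Function.Involutive bar) (hw : Admissible bar a w)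
    {A₂ B₂ : List (List S)} (A₁ B₁ : List (List S))
    (hA₁ : ∀ g ∈ A₁, g ∈ PaBoth bar a w) (hB₁ : ∀ g ∈ B₁, g ∈ PaBoth bar a w)
    (hA₂ : ∀ g ∈ A₂, g ∈ PaBoth bar a w) (hB₂ : ∀ g ∈ B₂, g ∈ PaBoth bar a w)
    (hAB : ∀ g ∈ A₁, ∀ b ∈ B₂.head?, g.length ≤ b.length)
    (hBA : ∀ g ∈ B₁, ∀ b ∈ A₂.head?, g.length ≤ b.length) :
    Relation.ReflTransGen (HC bar a) (wrap bar w A₂ B₂)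
      (wrap bar w (A₁ ++ A₂) (B₁ ++ B₂)) := by
  cases hm : (A₁ ++ B₁).argmax List.length with
  | none =>
    obtain ⟨rfl, rfl⟩ := List.append_eq_nil_iff.mp (List.argmax_eq_none.mp hm)
    exact .refl
  | some g =>
    have hmax : ∀ c ∈ A₁ ++ B₁, c.length ≤ g.length :=
      fun _ hc => List.le_of_mem_argmax hc hm
    rcases List.mem_append.mp (List.argmax_mem hm) with hg | hg
    · obtain ⟨K, T, hKT⟩ := List.append_of_mem hg
      have hK : K.length < A₁.length := by simp [hKT]
      subst hKT
      have hchunk := hw.reflTransGen_wrap_append_left hbar hA₂ hB₂ (l := g :: T)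
        (fun c hc => hA₁ c (by simp_all)) (fun c hc => hAB c (by simp_all))
      have hrest := hw.reflTransGen_wrap hbar K B₁ (A₂ := g :: T ++ A₂)
        (fun c hc => hA₁ c (by simp [hc])) hB₁
        (fun c hc => by rcases List.mem_append.mp hc with hc | hc <;> simp_all)
        hB₂ (fun c hc => hAB c (by simp [hc])) (fun c hc => by simpa using hmax c (by simp [hc]))
      simpa using hchunk.trans hrest
    · obtain ⟨K, T, hKT⟩ := List.append_of_mem hg
      have hK : K.length < B₁.length := by simp [hKT]
      subst hKT
      have hchunk := hw.reflTransGen_wrap_append_right hbar hA₂ hB₂ (l := g :: T)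
        (fun c hc => hB₁ c (by simp_all)) (fun c hc => hBA c (by simp_all))
      have hrest := hw.reflTransGen_wrap hbar A₁ K (B₂ := g :: T ++ B₂)
        hA₁ (fun c hc => hB₁ c (by simp [hc])) hA₂
        (fun c hc => by rcases List.mem_append.mp hc with hc | hc <;> simp_all)
        (fun c hc => by simpa using hmax c (by simp [hc])) (fun c hc => hBA c (by simp [hc]))
      simpa using hchunk.trans hrest
termination_by A₁.length + B₁.length
decreasing_by all_goals omega

theorem Admissible.append_append_comp_mem_HCstar (hbar : Function.Involutive bar)
    (hw : Admissible bar a w) {x z : List S} (hx : x ∈ star (PaBoth bar a w))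
    (hz : z ∈ star (PaBoth bar a w)) : x ++ w ++ comp bar z ∈ HCstar bar a w := by
  obtain ⟨A, hA, rfl⟩ := hx
  obtain ⟨B, hB, rfl⟩ := hz
  simpa [wrap, HCstar] using
    hw.reflTransGen_wrap hbar A B (A₂ := []) (B₂ := []) hA hB (by simp) (by simp) (by simp)
      (by simp)

lemma barSa_eq_Pa_comp (hbar : Function.Involutive bar) (t : List S) :
    barSa bar a t = Pa a (comp bar t) := by
  ext g
  rw [barSa, Set.mem_ofPred_eq, ← comp_append, comp_suffix_iff hbar, mem_Pa]

end Completion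

end

theorem stmt14_general (bar : S → S) (hbar : Function.Involutive bar)
    (a w : List S)
    (hp : a <+: w) (hs : comp bar a <:+ w)
    (hnc : NonCrossing bar a w) (u v : List S)
    (hu : u ∈ Pa a w) (hv : v ∈ barSa bar a w)
    (h1 : v ∈ star (Pa a (u ++ a)))
    (h2 : u ∈ star (barSa bar a (comp bar a ++ comp bar v))) :
    ∀ x ∈ star (Pa a (u ++ a)), ∀ y ∈ star (comp bar '' Pa a (u ++ a)),
      x ++ w ++ y ∈ HCstar bar a w := by
  intro x hx y hy
  have hw := admissible_of_nonCrossing hbar hp hs hnc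
  have hv' : v ++ a <+: comp bar w := by
    rwa [barSa_eq_Pa_comp hbar, mem_Pa] at hv
  have hu' : u ∈ star (Pa a (v ++ a)) := by
    rwa [← comp_append, barSa_eq_Pa_comp hbar, comp_comp hbar] at h2
  have hpieces : Pa a (u ++ a) ⊆ star (PaBoth bar a w) := fun p hp' =>
    star_mono (Set.inter_subset_inter (fun _ hg => hg.trans hu) (fun _ hg => hg.trans hv'))
      (mem_star_inter_of_mem_union (List.prefix_of_prefix_length_le hp hu (by simp))
        (List.prefix_of_prefix_length_le hw.prefix_comp hv' (by simp)) h1 hu' (Or.inl hp'))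
  simpa [comp_comp hbar] using hw.append_append_comp_mem_HCstar hbar
    (star_subset_star hpieces hx) (star_subset_star hpieces (comp_mem_star hbar hy))

theorem stmt14 (bar : S → S) (hbar : Function.Involutive bar)
    (a w : List S) (ha : a ≠ comp bar a)
    (hp : a <+: w) (hs : comp bar a <:+ w)
    (hnc : NonCrossing bar a w) (u v : List S)
    (hu : u ∈ Pa a w) (hv : v ∈ barSa bar a w)
    (h1 : v ∈ star (Pa a (u ++ a)))
    (h2 : u ∈ star (barSa bar a (comp bar a ++ comp bar v))) :
    ∀ x ∈ star (Pa a (u ++ a)), ∀ y ∈ star (comp bar '' Pa a (u ++ a)),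
      x ++ w ++ y ∈ HCstar bar a w :=
  stmt14_general bar hbar a w hp hs hnc u v hu hv h1 h2

end Hairpin
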